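/- Let g : {0,1}^w → {0,1} with p = wt(g)/2^w and d = min_{y} C_y(g), and define f : {0,1}^{hw} → {0,1} by f(x^{(1)},…,x^{(h)}) = g(x^{(1)}) ∨ ⋯ ∨ g(x^{(h)}) on disjoint blocks. Then D_ave(f) ≥ h·d·(1−p)^h, and D_ave(f) ≤ h·D_ave(g). -/

import Mathlib

/-!
Lower bound: on an input all of whose blocks evaluate to `false` under `g` (a `(1 - p) ^ h`
fraction of all inputs), the variables a correct tree reads inside each block must form a
certificate for `g` on that block, so it reads at least `d` variables per block.

Upper bound: evaluate the blocks one after the other with a tree for `g`, stopping at the first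
block on which `g` is true. The cost is at most the sum of the costs on the blocks, and each
block of a uniformly random input is uniformly random.
-/

/-- Decision trees over `n` boolean variables. -/
inductive DTree (n : ℕ) : Type where
  | leaf : Bool → DTree n
  | node : Fin n → DTree n → DTree n → DTree n

namespace DTree

/-- Evaluate a decision tree on an input. -/
def eval {n : ℕ} : DTree n → (Fin n → Bool) → Bool
  | leaf b, _ => b
  | node i t0 t1, x => if x i then eval t1 x else eval t0 x

/-- Number of queries made on input `x`. -/
def cost {n : ℕ} : DTree n → (Fin n → Bool) → ℕ
  | leaf _, _ => 0
  | node i t0 t1, x => 1 + (if x i then cost t1 x else cost t0 x)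

/-- Depth of a decision tree. -/
def depth {n : ℕ} : DTree n → ℕ
  | leaf _ => 0
  | node _ t0 t1 => 1 + max (depth t0) (depth t1)

end DTree

/-- `T` computes `f` with zero error. -/
def Computes {n : ℕ} (T : DTree n) (f : (Fin n → Bool) → Bool) : Prop :=
  ∀ x, T.eval x = f x

/-- Average cost of a decision tree under the uniform distribution. -/
noncomputable def avgCost {n : ℕ} (T : DTree n) : ℝ :=
  (∑ x : Fin n → Bool, (T.cost x : ℝ)) / 2 ^ n

/-- Average-case deterministic query complexity under the uniform distribution. -/
noncomputable def Dave {n : ℕ} (f : (Fin n → Bool) → Bool) : ℝ :=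
  sInf {c : ℝ | ∃ T : DTree n, Computes T f ∧ avgCost T = c}

/-- Worst-case deterministic query complexity. -/
noncomputable def Dworst {n : ℕ} (f : (Fin n → Bool) → Bool) : ℕ :=
  sInf {d : ℕ | ∃ T : DTree n, Computes T f ∧ T.depth = d}

/-- The weight of a boolean function: the number of inputs mapped to `true`. -/
def wt {n : ℕ} (f : (Fin n → Bool) → Bool) : ℕ :=
  (Finset.univ.filter fun x : Fin n → Bool => f x = true).card

/-- `S` is a certificate of `f` on input `x`. -/
def IsCert {n : ℕ} (f : (Fin n → Bool) → Bool) (x : Fin n → Bool) (S : Finset (Fin n)) : Prop :=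
  ∀ y : Fin n → Bool, (∀ i ∈ S, y i = x i) → f y = f x

/-- Certificate complexity of `f` on input `x`. -/
noncomputable def certC {n : ℕ} (f : (Fin n → Bool) → Bool) (x : Fin n → Bool) : ℕ :=
  sInf {k : ℕ | ∃ S : Finset (Fin n), IsCert f x S ∧ S.card = k}

/-- The weight of the subfunction `f|ρ`, where `ρ : Fin n → Option Bool` is a restriction:
the number of inputs consistent with `ρ` on which `f` outputs `true`. -/
def wtR {n : ℕ} (f : (Fin n → Bool) → Bool) (ρ : Fin n → Option Bool) : ℕ :=
  (Finset.univ.filter fun x : Fin n → Bool =>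
    f x = true ∧ ∀ i : Fin n, ∀ b : Bool, ρ i = some b → x i = b).card

/-- Number of coordinates fixed by a restriction. -/
def suppCard {n : ℕ} (ρ : Fin n → Option Bool) : ℕ :=
  (Finset.univ.filter fun i : Fin n => (ρ i).isSome).card

/-- The restriction given by the first `j` steps of a decision-tree path `L`. -/
def PathRho {n : ℕ} (L : List (Fin n × Bool)) (j : ℕ) : Fin n → Option Bool :=
  fun i => (L.take j).lookup i

/-- The path `L` is `δ`-parity with respect to `f`. -/
def DeltaParityPath {n : ℕ} (f : (Fin n → Bool) → Bool) (δ : ℝ)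
    (L : List (Fin n × Bool)) : Prop :=
  ∀ j : ℕ, 1 ≤ j → j ≤ L.length →
    (1/2) * (1 - δ) * (wtR f (PathRho L (j-1)) : ℝ) ≤ (wtR f (PathRho L j) : ℝ) ∧
    (wtR f (PathRho L j) : ℝ) ≤ (1/2) * (1 + δ) * (wtR f (PathRho L (j-1)) : ℝ)

/-- `f` is a `(t,δ)`-parity function: every path of length at most `t` is δ-parity. -/
def ParityFun {n : ℕ} (f : (Fin n → Bool) → Bool) (t : ℕ) (δ : ℝ) : Prop :=
  ∀ L : List (Fin n × Bool), (L.map Prod.fst).Nodup → L.length ≤ t → DeltaParityPath f δ L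

/-- The subfunction `f|ρ`, viewed as a function on the full cube. -/
def restrictFun {n : ℕ} (f : (Fin n → Bool) → Bool) (ρ : Fin n → Option Bool) :
    (Fin n → Bool) → Bool :=
  fun x => f fun i => (ρ i).getD (x i)

/-- Probability mass of the restriction `ρ` under the `p`-random restriction `R_p`. -/
noncomputable def rpMass {n : ℕ} (p : ℝ) (ρ : Fin n → Option Bool) : ℝ :=
  ∏ i : Fin n, if (ρ i).isSome then (1 - p) / 2 else p

/-- `f` is `λ`-critical. -/
def IsCritical {n : ℕ} (lam : ℝ) (f : (Fin n → Bool) → Bool) : Prop :=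
  ∀ p : ℝ, 0 ≤ p → p ≤ 1 → ∀ t : ℕ,
    (∑ ρ : Fin n → Option Bool,
      if t ≤ Dworst (restrictFun f ρ) then rpMass p ρ else 0) ≤ (p * lam) ^ t

/-- The index of the `j`-th variable of the `k`-th block. -/
def blockIdx (h w : ℕ) (k : Fin h) (j : Fin w) : Fin (h * w) :=
  ⟨k.val * w + j.val, by
    have hk := k.isLt
    have hj := j.isLt
    calc k.val * w + j.val < k.val * w + w := by omega
      _ = (k.val + 1) * w := by ring
      _ ≤ h * w := Nat.mul_le_mul_right w hk⟩

namespace DTree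

variable {n : ℕ}

def queries : DTree n → (Fin n → Bool) → Finset (Fin n)
  | leaf _, _ => ∅
  | node i t0 t1, x => insert i (if x i then queries t1 x else queries t0 x)

theorem card_queries_le_cost (T : DTree n) (x : Fin n → Bool) :
    (T.queries x).card ≤ T.cost x := by
  induction T with
  | leaf b => simp [queries, cost]
  | node i t0 t1 ih0 ih1 =>
    simp only [queries, cost]
    cases x i
    · exact (Finset.card_insert_le _ _).trans (by simpa [add_comm] using ih0)
    · exact (Finset.card_insert_le _ _).trans (by simpa [add_comm] using ih1)

theorem eval_eq_of_forall_mem_queries (T : DTree n) {x y : Fin n → Bool}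
    (hxy : ∀ i ∈ T.queries x, y i = x i) : T.eval y = T.eval x := by
  induction T with
  | leaf b => rfl
  | node i t0 t1 ih0 ih1 =>
    have hi : y i = x i := hxy i (Finset.mem_insert_self _ _)
    simp only [queries] at hxy
    simp only [eval, hi]
    cases hxi : x i
    · exact ih0 fun j hj => hxy j (by simp [hxi, hj])
    · exact ih1 fun j hj => hxy j (by simp [hxi, hj])

def queryList (f : (Fin n → Bool) → Bool) : List (Fin n) → (Fin n → Bool) → DTree n
  | [], σ => leaf (f σ)
  | i :: l, σ => node i (queryList f l (Function.update σ i false))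
      (queryList f l (Function.update σ i true))

theorem eval_queryList (f : (Fin n → Bool) → Bool) (l : List (Fin n)) (σ x : Fin n → Bool) :
    (queryList f l σ).eval x = f fun j => if j ∈ l then x j else σ j := by
  induction l generalizing σ with
  | nil => simp [queryList, eval]
  | cons i l ih =>
    have key : (fun j => if j ∈ l then x j else Function.update σ i (x i) j) =
        fun j => if j ∈ i :: l then x j else σ j := by
      funext j
      by_cases hj : j = i
      · subst hj; simp
      · simp [hj, Function.update_of_ne]
    rw [← key]
    cases hxi : x i <;> simp [queryList, eval, hxi, ih]

theorem exists_computes (f : (Fin n → Bool) → Bool) : ∃ T : DTree n, Computes T f :=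
  ⟨queryList f (List.finRange n) (fun _ => false), fun x => by simp [eval_queryList]⟩

def graft : DTree n → (Bool → DTree n) → DTree n
  | leaf b, c => c b
  | node i t0 t1, c => node i (graft t0 c) (graft t1 c)

theorem eval_graft (T : DTree n) (c : Bool → DTree n) (x : Fin n → Bool) :
    (graft T c).eval x = (c (T.eval x)).eval x := by
  induction T with
  | leaf b => rfl
  | node i t0 t1 ih0 ih1 => cases hxi : x i <;> simp [graft, eval, hxi, ih0, ih1]

theorem cost_graft (T : DTree n) (c : Bool → DTree n) (x : Fin n → Bool) :
    (graft T c).cost x = T.cost x + (c (T.eval x)).cost x := by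
  induction T with
  | leaf b => simp [graft, cost, eval]
  | node i t0 t1 ih0 ih1 => cases hxi : x i <;> simp [graft, cost, eval, hxi, ih0, ih1] <;> omega

def relabel {m : ℕ} (φ : Fin m → Fin n) : DTree m → DTree n
  | leaf b => leaf b
  | node i t0 t1 => node (φ i) (relabel φ t0) (relabel φ t1)

theorem eval_relabel {m : ℕ} (φ : Fin m → Fin n) (T : DTree m) (x : Fin n → Bool) :
    (relabel φ T).eval x = T.eval (x ∘ φ) := by
  induction T with
  | leaf b => rfl
  | node i t0 t1 ih0 ih1 => simp [relabel, eval, ih0, ih1]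

theorem cost_relabel {m : ℕ} (φ : Fin m → Fin n) (T : DTree m) (x : Fin n → Bool) :
    (relabel φ T).cost x = T.cost (x ∘ φ) := by
  induction T with
  | leaf b => rfl
  | node i t0 t1 ih0 ih1 => simp [relabel, cost, ih0, ih1]

def disj : List (DTree n) → DTree n
  | [] => leaf false
  | T :: Ts => graft T fun b => if b then leaf true else disj Ts

theorem eval_disj (Ts : List (DTree n)) (x : Fin n → Bool) :
    (disj Ts).eval x = Ts.any (·.eval x) := by
  induction Ts with
  | nil => rfl
  | cons T Ts ih => cases hT : T.eval x <;> simp [disj, eval_graft, hT, ih, eval]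

theorem cost_disj_le (Ts : List (DTree n)) (x : Fin n → Bool) :
    (disj Ts).cost x ≤ (Ts.map (·.cost x)).sum := by
  induction Ts with
  | nil => simp [disj, cost]
  | cons T Ts ih =>
    rw [disj, cost_graft, List.map_cons, List.sum_cons]
    cases T.eval x
    · simpa using ih
    · simp [cost]

end DTree

section QueryComplexity

variable {n : ℕ}

theorem avgCost_nonneg (T : DTree n) : 0 ≤ avgCost T := by
  unfold avgCost
  positivity

theorem Dave_le_avgCost {f : (Fin n → Bool) → Bool} {T : DTree n} (hT : Computes T f) :
    Dave f ≤ avgCost T :=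
  csInf_le ⟨0, by rintro c ⟨T', -, rfl⟩; exact avgCost_nonneg T'⟩ ⟨T, hT, rfl⟩

theorem le_Dave {f : (Fin n → Bool) → Bool} {c : ℝ}
    (hc : ∀ T : DTree n, Computes T f → c ≤ avgCost T) : c ≤ Dave f := by
  obtain ⟨T, hT⟩ := DTree.exists_computes f
  exact le_csInf ⟨_, T, hT, rfl⟩ fun _ ⟨T', hT', hc'⟩ => hc'.symm ▸ hc T' hT'

theorem Dave_le_mul_Dave {m : ℕ} {f : (Fin n → Bool) → Bool} {g : (Fin m → Bool) → Bool}
    {c : ℝ} (hc : 0 ≤ c)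
    (hfg : ∀ Tg : DTree m, Computes Tg g → ∃ Tf : DTree n, Computes Tf f ∧
      avgCost Tf ≤ c * avgCost Tg) :
    Dave f ≤ c * Dave g := by
  rcases hc.eq_or_lt with rfl | hc
  · obtain ⟨Tg, hTg⟩ := DTree.exists_computes g
    obtain ⟨Tf, hTf, hle⟩ := hfg Tg hTg
    simpa using (Dave_le_avgCost hTf).trans hle
  · rw [← div_le_iff₀' hc]
    refine le_Dave fun Tg hTg => ?_
    obtain ⟨Tf, hTf, hle⟩ := hfg Tg hTg
    rw [div_le_iff₀' hc]
    exact (Dave_le_avgCost hTf).trans hle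

theorem card_mul_div_le_avgCost (T : DTree n) (A : Finset (Fin n → Bool)) {c : ℕ}
    (hc : ∀ x ∈ A, c ≤ T.cost x) :
    (A.card * c : ℝ) / 2 ^ n ≤ avgCost T := by
  unfold avgCost
  gcongr
  calc (A.card * c : ℝ) = ∑ _x ∈ A, (c : ℝ) := by simp [mul_comm]
    _ ≤ ∑ x ∈ A, (T.cost x : ℝ) := Finset.sum_le_sum fun x hx => by exact_mod_cast hc x hx
    _ ≤ ∑ x, (T.cost x : ℝ) := Finset.sum_le_sum_of_subset_of_nonneg A.subset_univ
        fun _ _ _ => by positivity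

end QueryComplexity

theorem Fintype.sum_comp_eval_div {ι α : Type*} [Fintype ι] [DecidableEq ι] [Fintype α]
    [Nonempty α] (k : ι) (F : α → ℝ) :
    (∑ G : ι → α, F (G k)) / Fintype.card α ^ Fintype.card ι =
      (∑ a, F a) / Fintype.card α := by
  have hcard : Fintype.card α ^ Fintype.card ι =
      Fintype.card α * Fintype.card ({j // j ≠ k} → α) := by
    rw [← Fintype.card_fun, Fintype.card_congr (Equiv.funSplitAt k α), Fintype.card_prod]
  rw [← (Equiv.funSplitAt k α).symm.sum_comp, Fintype.sum_prod_type]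
  simp only [Equiv.funSplitAt, Equiv.piSplitAt_symm_apply, dif_pos, Finset.sum_const,
    Finset.card_univ, nsmul_eq_mul]
  rw [← Finset.mul_sum, ← Nat.cast_pow, hcard]
  push_cast
  have : (Fintype.card ({j // j ≠ k} → α) : ℝ) ≠ 0 := by positivity
  field_simp

theorem blockIdx_eq_finProdFinEquiv {h w : ℕ} (k : Fin h) (j : Fin w) :
    blockIdx h w k j = finProdFinEquiv (k, j) :=
  Fin.ext (by simp [blockIdx, finProdFinEquiv, Nat.mul_comm, Nat.add_comm])

def blocks (h w : ℕ) : (Fin (h * w) → Bool) ≃ (Fin h → Fin w → Bool) where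
  toFun x k j := x (blockIdx h w k j)
  invFun G i := G (finProdFinEquiv.symm i).1 (finProdFinEquiv.symm i).2
  left_inv x := by
    funext i
    simp only [blockIdx_eq_finProdFinEquiv, Prod.mk.eta, Equiv.apply_symm_apply]
  right_inv G := by funext k j; simp [blockIdx_eq_finProdFinEquiv]

def blockOr (h w : ℕ) (g : (Fin w → Bool) → Bool) (x : Fin (h * w) → Bool) : Bool :=
  decide (∃ k : Fin h, g (blocks h w x k) = true)

section Blocks

variable {h w : ℕ}

theorem blocks_apply (x : Fin (h * w) → Bool) (k : Fin h) :
    blocks h w x k = x ∘ blockIdx h w k :=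
  rfl

theorem blockOr_eq_true_iff {g : (Fin w → Bool) → Bool} {x : Fin (h * w) → Bool} :
    blockOr h w g x = true ↔ ∃ k, g (blocks h w x k) = true :=
  decide_eq_true_iff

theorem blockOr_eq_false_iff {g : (Fin w → Bool) → Bool} {x : Fin (h * w) → Bool} :
    blockOr h w g x = false ↔ ∀ k, g (blocks h w x k) = false := by
  simp [blockOr]

theorem card_blockOr_eq_false (g : (Fin w → Bool) → Bool) :
    (Finset.univ.filter fun x => blockOr h w g x = false).card =
      (Finset.univ.filter fun y => g y = false).card ^ h := by
  rw [Finset.card_equiv (blocks h w) (t := Fintype.piFinset fun _ => Finset.univ.filter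
      fun y => g y = false) (by simp [blockOr_eq_false_iff]),
    Fintype.card_piFinset_const]

end Blocks

section UpperBound

variable {h w : ℕ} {g : (Fin w → Bool) → Bool}

def blockOrTree (h : ℕ) {w : ℕ} (Tg : DTree w) : DTree (h * w) :=
  DTree.disj ((List.finRange h).map fun k => Tg.relabel (blockIdx h w k))

theorem computes_blockOrTree {Tg : DTree w} (hTg : Computes Tg g) :
    Computes (blockOrTree h Tg) (blockOr h w g) := by
  intro x
  rw [Bool.eq_iff_iff, blockOr_eq_true_iff]
  simp [blockOrTree, DTree.eval_disj, DTree.eval_relabel, Function.comp_def, blocks_apply, hTg _]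

theorem cost_blockOrTree_le (Tg : DTree w) (x : Fin (h * w) → Bool) :
    (blockOrTree h Tg).cost x ≤ ∑ k, Tg.cost (blocks h w x k) :=
  (DTree.cost_disj_le _ _).trans_eq <| by
    simp [Fin.sum_univ_def, DTree.cost_relabel, Function.comp_def, blocks_apply]

theorem avgCost_blockOrTree_le (Tg : DTree w) :
    avgCost (blockOrTree h Tg) ≤ h * avgCost Tg := by
  have hpow : (2 : ℝ) ^ (h * w) = Fintype.card (Fin w → Bool) ^ Fintype.card (Fin h) := by
    simp [pow_mul']
  calc avgCost (blockOrTree h Tg)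
      ≤ (∑ x, ∑ k, (Tg.cost (blocks h w x k) : ℝ)) / 2 ^ (h * w) := by
        unfold avgCost
        gcongr with x
        exact_mod_cast cost_blockOrTree_le Tg x
    _ = ∑ k : Fin h, (∑ G : Fin h → Fin w → Bool, (Tg.cost (G k) : ℝ)) /
          Fintype.card (Fin w → Bool) ^ Fintype.card (Fin h) := by
        rw [Finset.sum_comm, Finset.sum_div, hpow]
        exact Finset.sum_congr rfl fun k _ => by
          rw [(blocks h w).sum_comp fun G => (Tg.cost (G k) : ℝ)]
    _ = h * avgCost Tg := by
        rw [Finset.sum_congr rfl fun k _ => Fintype.sum_comp_eval_div k fun y => (Tg.cost y : ℝ)]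
        simp [avgCost]

theorem Dave_blockOr_le (g : (Fin w → Bool) → Bool) : Dave (blockOr h w g) ≤ h * Dave g :=
  Dave_le_mul_Dave (Nat.cast_nonneg h) fun Tg hTg =>
    ⟨blockOrTree h Tg, computes_blockOrTree hTg, avgCost_blockOrTree_le Tg⟩

end UpperBound

section LowerBound

variable {h w : ℕ} {g : (Fin w → Bool) → Bool} {T : DTree (h * w)}

/-- Replacing block `k` by an input that agrees with it on the queried variables does not change
the output of `T`, so every block of the new input is still `false`. -/
theorem isCert_of_blockOr_eq_false (hT : Computes T (blockOr h w g)) {x : Fin (h * w) → Bool}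
    (hx : blockOr h w g x = false) (k : Fin h) :
    IsCert g (blocks h w x k) (Finset.univ.filter fun j => blockIdx h w k j ∈ T.queries x) := by
  intro y hy
  set x' := (blocks h w).symm (Function.update (blocks h w x) k y)
  have hx'k : blocks h w x' k = y := by simp [x']
  have hagree : ∀ i ∈ T.queries x, x' i = x i := by
    intro i hi
    obtain ⟨⟨k', j⟩, rfl⟩ := finProdFinEquiv.surjective i
    rw [← blockIdx_eq_finProdFinEquiv] at hi ⊢
    change blocks h w x' k' j = blocks h w x k' j
    by_cases hk : k' = k
    · subst hk
      rw [hx'k]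
      exact hy j (by simpa using hi)
    · simp [x', hk]
  have hx' : blockOr h w g x' = false := by
    rw [← hT, T.eval_eq_of_forall_mem_queries hagree, hT, hx]
  rw [blockOr_eq_false_iff] at hx hx'
  rw [← hx'k, hx' k, hx k]

theorem mul_le_cost_of_blockOr_eq_false {d : ℕ} (hd : ∀ y, d ≤ certC g y)
    (hT : Computes T (blockOr h w g)) {x : Fin (h * w) → Bool} (hx : blockOr h w g x = false) :
    h * d ≤ T.cost x := by
  set S : Fin h → Finset (Fin w) := fun k => Finset.univ.filter fun j =>
    blockIdx h w k j ∈ T.queries x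
  have hS : ∀ k, d ≤ (S k).card := fun k =>
    (hd _).trans (Nat.sInf_le ⟨S k, isCert_of_blockOr_eq_false hT hx k, rfl⟩)
  have hinj : Set.InjOn (fun p : Σ _ : Fin h, Fin w => blockIdx h w p.1 p.2)
      (Finset.univ.sigma S) := by
    rintro ⟨k, j⟩ - ⟨k', j'⟩ - he
    simp only [blockIdx_eq_finProdFinEquiv, EmbeddingLike.apply_eq_iff_eq, Prod.mk.injEq] at he
    obtain ⟨rfl, rfl⟩ := he
    rfl
  calc h * d = ∑ _k : Fin h, d := by simp
    _ ≤ ∑ k, (S k).card := Finset.sum_le_sum fun k _ => hS k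
    _ = (Finset.univ.sigma S).card := (Finset.card_sigma _ _).symm
    _ ≤ (T.queries x).card := Finset.card_le_card_of_injOn _
        (fun p hp => by simpa [S] using (Finset.mem_sigma.1 hp).2) hinj
    _ ≤ T.cost x := T.card_queries_le_cost x

theorem le_Dave_blockOr {d : ℕ} (hd : ∀ y, d ≤ certC g y) :
    ((Finset.univ.filter fun y => g y = false).card ^ h * (h * d) : ℝ) / 2 ^ (h * w) ≤
      Dave (blockOr h w g) :=
  le_Dave fun T hT => by
    have := card_mul_div_le_avgCost T (Finset.univ.filter fun x => blockOr h w g x = false)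
      fun x hx => mul_le_cost_of_blockOr_eq_false hd hT (Finset.mem_filter.1 hx).2
    simpa [card_blockOr_eq_false] using this

end LowerBound

theorem one_sub_wt_div {w : ℕ} (g : (Fin w → Bool) → Bool) :
    1 - (wt g : ℝ) / 2 ^ w = ((Finset.univ.filter fun y => g y = false).card : ℝ) / 2 ^ w := by
  have hcard := Finset.card_filter_add_card_filter_not
    (s := (Finset.univ : Finset (Fin w → Bool))) (p := fun y => g y = true)
  simp only [Bool.not_eq_true, Finset.card_univ, Fintype.card_fun, Fintype.card_bool,
    Fintype.card_fin] at hcard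
  have hcard' : (wt g : ℝ) + (Finset.univ.filter fun y => g y = false).card = 2 ^ w := by
    exact_mod_cast hcard
  rw [eq_div_iff (by positivity), sub_mul, div_mul_cancel₀ _ (by positivity)]
  linarith

theorem stmt17 (w h : ℕ) (g : (Fin w → Bool) → Bool) (p : ℝ)
    (hp : p = (wt g : ℝ) / 2 ^ w) (d : ℕ)
    (hd : d = sInf {k : ℕ | ∃ y : Fin w → Bool, certC g y = k}) :
    ((h * d : ℕ) : ℝ) * (1 - p) ^ h ≤
      Dave (fun x : Fin (h * w) → Bool =>
        decide (∃ k : Fin h, g (fun j : Fin w => x (blockIdx h w k j)) = true)) ∧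
    Dave (fun x : Fin (h * w) → Bool =>
        decide (∃ k : Fin h, g (fun j : Fin w => x (blockIdx h w k j)) = true)) ≤
      h * Dave g := by
  have hd' : ∀ y, d ≤ certC g y := fun y => hd ▸ Nat.sInf_le ⟨y, rfl⟩
  refine ⟨?_, Dave_blockOr_le g⟩
  calc ((h * d : ℕ) : ℝ) * (1 - p) ^ h
      = ((Finset.univ.filter fun y => g y = false).card ^ h * (h * d) : ℝ) / 2 ^ (h * w) := by
        rw [hp, one_sub_wt_div, div_pow, pow_mul']
        push_cast
        ring
    _ ≤ Dave (blockOr h w g) := le_Dave_blockOr hd'
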